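/- Let Z : K₁ → K₂ be a symmetric Hilbert–Schmidt operator with ‖Z‖ < 1 (Z = Z^τ), and set Y := (P₁ + Z†Z)⁻¹ on K₁. Then P_Z := (P₁ + Z)Y(P₁ + Z†) is a κ-self-adjoint idempotent (P_Z = P_Z† = P_Z²) with P_Z + P̄_Z = 1, CP_Z is positive definite on ran P_Z = ran(P₁ + Z), and P₁ - P_Z is Hilbert–Schmidt; i.e. P_Z is a basis projection of (K, κ) in the Hilbert–Schmidt class of P₁. -/

import Mathlib

open ContinuousLinearMap

/-- `T` is a Hilbert–Schmidt operator. -/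
def IsHS {K : Type*} [NormedAddCommGroup K] [InnerProductSpace ℂ K]
    (T : K →L[ℂ] K) : Prop :=
  ∃ (ι : Type) (b : HilbertBasis ι ℂ K), Summable fun i => ‖T (b i)‖ ^ 2

/-- The conjugate operator `Ā = J A J` of `A` with respect to the conjugation `J`. -/
noncomputable def conjOp {K : Type*} [NormedAddCommGroup K] [InnerProductSpace ℂ K]
    (J : K ≃ₗᵢ⋆[ℂ] K) (A : K →L[ℂ] K) : K →L[ℂ] K :=
  LinearMap.mkContinuous
    { toFun := fun f => J (A (J f))
      map_add' := by intro x y; simp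
      map_smul' := by intro c x; simp [map_smulₛₗ] }
    ‖A‖ fun f => by
      calc ‖J (A (J f))‖ = ‖A (J f)‖ := J.norm_map _
        _ ≤ ‖A‖ * ‖J f‖ := A.le_opNorm _
        _ = ‖A‖ * ‖f‖ := by rw [J.norm_map]

section HSAux
open ENNReal NNReal
variable {K : Type*} [NormedAddCommGroup K] [InnerProductSpace ℂ K] [CompleteSpace K]

noncomputable def hsSum {ι : Type*} (b : HilbertBasis ι ℂ K) (T : K →L[ℂ] K) : ℝ≥0∞ :=
  ∑' i, (‖T (b i)‖₊ : ℝ≥0∞) ^ 2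

lemma parseval_hasSum {ι : Type*} (b : HilbertBasis ι ℂ K) (x : K) :
    HasSum (fun i => ‖(inner ℂ (b i) x : ℂ)‖ ^ 2) (‖x‖ ^ 2) := by
  have h := (b.hasSum_inner_mul_inner x x).mapL Complex.reCLM
  convert h using 2 with i
  · have : (inner ℂ x (b i) : ℂ) = starRingEnd ℂ (inner ℂ (b i) x) := (inner_conj_symm _ _).symm
    rw [this, Complex.reCLM_apply, RCLike.conj_mul]; norm_cast
  · rw [Complex.reCLM_apply, inner_self_eq_norm_sq_to_K (𝕜 := ℂ)]; norm_cast

lemma parseval_nnreal {ι : Type*} (b : HilbertBasis ι ℂ K) (x : K) :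
    ∑' i, (‖(inner ℂ (b i) x : ℂ)‖₊ : ℝ≥0∞) ^ 2 = (‖x‖₊ : ℝ≥0∞) ^ 2 := by
  have h : HasSum (fun i => (‖(inner ℂ (b i) x : ℂ)‖₊ ^ 2 : ℝ≥0)) (‖x‖₊ ^ 2) := by
    rw [← NNReal.hasSum_coe]
    push_cast
    exact parseval_hasSum b x
  rw [show ((‖x‖₊ : ℝ≥0∞))^2 = ((‖x‖₊ ^ 2 : ℝ≥0) : ℝ≥0∞) by push_cast; ring,
    ← ENNReal.tsum_coe_eq h]
  push_cast
  ring

lemma hsSum_adjoint {ι κ : Type*} (b : HilbertBasis ι ℂ K) (c : HilbertBasis κ ℂ K)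
    (T : K →L[ℂ] K) : hsSum b T = hsSum c (adjoint T) := by
  unfold hsSum
  calc ∑' i, (‖T (b i)‖₊ : ℝ≥0∞) ^ 2
      = ∑' i, ∑' j, (‖(inner ℂ (c j) (T (b i)) : ℂ)‖₊ : ℝ≥0∞) ^ 2 := by
        exact tsum_congr fun i => (parseval_nnreal c (T (b i))).symm
    _ = ∑' j, ∑' i, (‖(inner ℂ (b i) (adjoint T (c j)) : ℂ)‖₊ : ℝ≥0∞) ^ 2 := by
        rw [ENNReal.tsum_comm]
        refine tsum_congr fun j => tsum_congr fun i => ?_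
        congr 2
        have h1 : (inner ℂ (c j) (T (b i)) : ℂ) = inner ℂ (adjoint T (c j)) (b i) :=
          (ContinuousLinearMap.adjoint_inner_left T (b i) (c j)).symm
        rw [h1, ← inner_conj_symm (b i) (adjoint T (c j))]
        exact (RCLike.nnnorm_conj _).symm
    _ = ∑' j, (‖adjoint T (c j)‖₊ : ℝ≥0∞) ^ 2 :=
        tsum_congr fun j => parseval_nnreal b (adjoint T (c j))

lemma isHS_iff {ι : Type} (b : HilbertBasis ι ℂ K) (T : K →L[ℂ] K) :
    IsHS T ↔ hsSum b T ≠ ⊤ := by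
  constructor
  · rintro ⟨κ, c, hc⟩
    rw [hsSum_adjoint b c T, ← hsSum_adjoint c c T]
    unfold hsSum
    rw [show (fun j => ((‖T (c j)‖₊ : ℝ≥0∞)) ^ 2) = fun j => ((‖T (c j)‖₊ ^ 2 : ℝ≥0) : ℝ≥0∞) by
      funext j; push_cast; ring]
    rw [ENNReal.tsum_coe_ne_top_iff_summable_coe]
    convert hc using 2 with j
    simp
  · intro h
    refine ⟨ι, b, ?_⟩
    rw [show (fun i => ‖T (b i)‖ ^ 2) = fun i => ((‖T (b i)‖₊ ^ 2 : ℝ≥0) : ℝ) by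
      funext i; push_cast; ring]
    rw [← ENNReal.tsum_coe_ne_top_iff_summable_coe]
    convert h using 2 with i
    simp [hsSum]

lemma hsSum_comp_le {ι : Type*} (b : HilbertBasis ι ℂ K) (A T : K →L[ℂ] K) :
    hsSum b (A ∘L T) ≤ (‖A‖₊ : ℝ≥0∞) ^ 2 * hsSum b T := by
  unfold hsSum
  rw [← ENNReal.tsum_mul_left]
  refine ENNReal.tsum_le_tsum fun i => ?_
  rw [← mul_pow]
  gcongr
  · exact_mod_cast A.le_opNNNorm (T (b i))

lemma IsHS.comp_left {T : K →L[ℂ] K} (hT : IsHS T) (A : K →L[ℂ] K) : IsHS (A ∘L T) := by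
  obtain ⟨ι, b, -⟩ := id hT
  rw [isHS_iff b] at hT ⊢
  exact ne_top_of_le_ne_top (ENNReal.mul_ne_top (by simp) hT) (hsSum_comp_le b A T)

lemma IsHS.adjoint' {T : K →L[ℂ] K} (hT : IsHS T) : IsHS (adjoint T) := by
  obtain ⟨ι, b, -⟩ := id hT
  rw [isHS_iff b] at hT ⊢
  rwa [← hsSum_adjoint b b T]

lemma IsHS.comp_right {T : K →L[ℂ] K} (hT : IsHS T) (A : K →L[ℂ] K) : IsHS (T ∘L A) := by
  have h1 : IsHS (adjoint A ∘L adjoint T) := hT.adjoint'.comp_left _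
  have h2 := h1.adjoint'
  rwa [adjoint_comp, adjoint_adjoint, adjoint_adjoint] at h2

lemma IsHS.add {S T : K →L[ℂ] K} (hS : IsHS S) (hT : IsHS T) : IsHS (S + T) := by
  obtain ⟨ι, b, -⟩ := id hS
  rw [isHS_iff b] at hS hT ⊢
  have key : ∀ a c : ℝ≥0∞, (a + c) ^ 2 ≤ 4 * (a ^ 2 + c ^ 2) := by
    intro a c
    rcases le_total a c with h | h
    · calc (a + c) ^ 2 ≤ (c + c) ^ 2 := by gcongr
        _ = 4 * c ^ 2 := by ring
        _ ≤ 4 * (a ^ 2 + c ^ 2) := by gcongr; exact self_le_add_left _ _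
    · calc (a + c) ^ 2 ≤ (a + a) ^ 2 := by gcongr
        _ = 4 * a ^ 2 := by ring
        _ ≤ 4 * (a ^ 2 + c ^ 2) := by gcongr; exact self_le_add_right _ _
  have hle : hsSum b (S + T) ≤ 4 * (hsSum b S + hsSum b T) := by
    unfold hsSum
    rw [← ENNReal.tsum_add, ← ENNReal.tsum_mul_left]
    refine ENNReal.tsum_le_tsum fun i => ?_
    have h1 : (‖(S + T) (b i)‖₊ : ℝ≥0∞) ≤ (‖S (b i)‖₊ : ℝ≥0∞) + ‖T (b i)‖₊ := by
      exact_mod_cast nnnorm_add_le _ _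
    calc (‖(S + T) (b i)‖₊ : ℝ≥0∞) ^ 2 ≤ ((‖S (b i)‖₊ : ℝ≥0∞) + ‖T (b i)‖₊) ^ 2 := by gcongr
      _ ≤ 4 * ((‖S (b i)‖₊ : ℝ≥0∞) ^ 2 + (‖T (b i)‖₊ : ℝ≥0∞) ^ 2) := key _ _
  exact ne_top_of_le_ne_top (ENNReal.mul_ne_top (by simp)
    (ENNReal.add_ne_top.2 ⟨hS, hT⟩)) hle

lemma IsHS.neg {T : K →L[ℂ] K} (hT : IsHS T) : IsHS (-T) := by
  obtain ⟨ι, b, hb⟩ := id hT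
  exact ⟨ι, b, by simpa using hb⟩


lemma IsHS.mul_left {T : K →L[ℂ] K} (hT : IsHS T) (A : K →L[ℂ] K) : IsHS (A * T) := by
  rw [ContinuousLinearMap.mul_def]; exact hT.comp_left A

lemma IsHS.mul_right {T : K →L[ℂ] K} (hT : IsHS T) (A : K →L[ℂ] K) : IsHS (T * A) := by
  rw [ContinuousLinearMap.mul_def]; exact hT.comp_right A

end HSAux

section CJAux
variable {K : Type*} [NormedAddCommGroup K] [InnerProductSpace ℂ K]
  (J : K ≃ₗᵢ⋆[ℂ] K)

lemma conjOp_apply (A : K →L[ℂ] K) (x : K) : conjOp J A x = J (A (J x)) := rfl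

lemma conjOp_add (A B : K →L[ℂ] K) : conjOp J (A + B) = conjOp J A + conjOp J B := by
  ext x; simp [conjOp_apply]

lemma conjOp_neg (A : K →L[ℂ] K) : conjOp J (-A) = -conjOp J A := by
  ext x; simp [conjOp_apply]

lemma conjOp_sub (A B : K →L[ℂ] K) : conjOp J (A - B) = conjOp J A - conjOp J B := by
  ext x; simp [conjOp_apply]

variable (hJ : ∀ f, J (J f) = f)
include hJ

lemma conjOp_one : conjOp J (1 : K →L[ℂ] K) = 1 := by
  ext x; simp [conjOp_apply, hJ]

lemma conjOp_mul (A B : K →L[ℂ] K) : conjOp J (A * B) = conjOp J A * conjOp J B := by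
  ext x; simp [conjOp_apply, mul_apply, hJ]

lemma conjOp_conjOp (A : K →L[ℂ] K) : conjOp J (conjOp J A) = A := by
  ext x; simp [conjOp_apply, hJ]

end CJAux

set_option maxHeartbeats 2000000 in
/-- For a symmetric Hilbert–Schmidt `Z : K₁ → K₂` with `‖Z‖ < 1` and
`Y = (P₁ + Z†Z)⁻¹` on `K₁` (extended by zero), the operator
`P_Z = (P₁+Z)Y(P₁+Z†)` is a κ-self-adjoint idempotent with `P_Z + P̄_Z = 1`,
`CP_Z` is positive definite on `ran P_Z = ran (P₁+Z)`, and `P₁ - P_Z` is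
Hilbert–Schmidt; i.e. `P_Z` is a basis projection of `(K, κ)` in the
Hilbert–Schmidt class of `P₁`. -/
theorem stmt14 {K : Type*} [NormedAddCommGroup K] [InnerProductSpace ℂ K] [CompleteSpace K]
    (J : K ≃ₗᵢ⋆[ℂ] K) (hJ : ∀ f, J (J f) = f)
    (P₁ : K →L[ℂ] K) (hP₁sa : IsSelfAdjoint P₁) (hP₁idem : P₁ ∘L P₁ = P₁)
    (hP₁conj : conjOp J P₁ = 1 - P₁)
    (C : K →L[ℂ] K) (hC : C = P₁ - (1 - P₁))
    (Z : K →L[ℂ] K) (hZsupp : Z = (1 - P₁) ∘L Z ∘L P₁)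
    (hZsym : conjOp J (adjoint Z) = Z) (hZnorm : ‖Z‖ < 1) (hZHS : IsHS Z)
    (Y : K →L[ℂ] K)
    (hY1 : (P₁ + (C ∘L adjoint Z ∘L C) ∘L Z) ∘L Y = P₁)
    (hY2 : Y ∘L (P₁ + (C ∘L adjoint Z ∘L C) ∘L Z) = P₁)
    (hY3 : Y = P₁ ∘L Y ∘L P₁) :
    C ∘L adjoint ((P₁ + Z) ∘L Y ∘L (P₁ + C ∘L adjoint Z ∘L C)) ∘L C =
        (P₁ + Z) ∘L Y ∘L (P₁ + C ∘L adjoint Z ∘L C) ∧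
      ((P₁ + Z) ∘L Y ∘L (P₁ + C ∘L adjoint Z ∘L C)) ∘L
          ((P₁ + Z) ∘L Y ∘L (P₁ + C ∘L adjoint Z ∘L C)) =
        (P₁ + Z) ∘L Y ∘L (P₁ + C ∘L adjoint Z ∘L C) ∧
      conjOp J ((P₁ + Z) ∘L Y ∘L (P₁ + C ∘L adjoint Z ∘L C)) =
        1 - (P₁ + Z) ∘L Y ∘L (P₁ + C ∘L adjoint Z ∘L C) ∧
      (∀ x : K, ((P₁ + Z) ∘L Y ∘L (P₁ + C ∘L adjoint Z ∘L C)) x ≠ 0 →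
        0 < (inner ℂ (((P₁ + Z) ∘L Y ∘L (P₁ + C ∘L adjoint Z ∘L C)) x)
          (C (((P₁ + Z) ∘L Y ∘L (P₁ + C ∘L adjoint Z ∘L C)) x)) : ℂ).re) ∧
      LinearMap.range (((P₁ + Z) ∘L Y ∘L (P₁ + C ∘L adjoint Z ∘L C) : K →L[ℂ] K) : K →ₗ[ℂ] K) =
        LinearMap.range ((P₁ + Z : K →L[ℂ] K) : K →ₗ[ℂ] K) ∧
      IsHS (P₁ - (P₁ + Z) ∘L Y ∘L (P₁ + C ∘L adjoint Z ∘L C)) := by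
  have hPadj : ContinuousLinearMap.adjoint P₁ = P₁ := isSelfAdjoint_iff'.1 hP₁sa
  simp only [← ContinuousLinearMap.mul_def, ← star_eq_adjoint] at hP₁idem hZsupp hZsym hY1 hY2 hY3 ⊢
  set a := star Z with ha
  have ps : star P₁ = P₁ := hP₁sa.star_eq
  have pp : P₁ * P₁ = P₁ := hP₁idem
  have zp : Z * P₁ = Z := by
    conv_lhs => rw [hZsupp]
    rw [mul_assoc, mul_assoc Z P₁ P₁, pp, ← hZsupp]
  have p1p : P₁ * (1 - P₁) = 0 := by rw [mul_sub, mul_one, pp, sub_self]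
  have pz : P₁ * Z = 0 := by
    conv_lhs => rw [hZsupp]
    rw [← mul_assoc, p1p, zero_mul]
  have ap : a * P₁ = 0 := by rw [ha, ← ps, ← star_mul, pz, star_zero]
  have pa : P₁ * a = a := by rw [ha, ← ps, ← star_mul, zp]
  have cz : C * Z = -Z := by rw [hC, sub_mul, pz, sub_mul, one_mul, pz, sub_zero, zero_sub]
  have zc : Z * C = Z := by
    rw [hC, mul_sub, zp, mul_sub, mul_one, zp, _root_.sub_sub_cancel]
  have cp : C * P₁ = P₁ := by rw [hC, sub_mul, pp, sub_mul, one_mul, pp, sub_self, sub_zero]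
  have pc : P₁ * C = P₁ := by
    rw [hC, mul_sub, pp, mul_sub, mul_one, pp, _root_.sub_sub_cancel]
  have ca : C * a = a := by rw [hC, sub_mul, pa, sub_mul, one_mul, pa, sub_self, sub_zero]
  have ac : a * C = -a := by rw [hC, mul_sub, ap, mul_sub, mul_one, ap, sub_zero, zero_sub]
  have hdagger : C * (a * C) = -a := by rw [ac, mul_neg, ca]
  rw [hdagger] at hY1 hY2 ⊢
  simp only [neg_mul, ← sub_eq_add_neg] at hY1 hY2 ⊢
  -- hY1 : (P₁ - a * Z) * Y = P₁, hY2 : Y * (P₁ - a * Z) = P₁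
  have py : P₁ * Y = Y := by
    conv_lhs => rw [hY3]
    rw [← mul_assoc, pp, ← hY3]
  have yp : Y * P₁ = Y := by
    conv_lhs => rw [hY3]
    rw [mul_assoc, mul_assoc Y P₁ P₁, pp, ← hY3]
  have sS : star (P₁ - a * Z) = P₁ - a * Z := by
    rw [star_sub, star_mul, ha, star_star, ps, ← ha]
  have ysp : star Y * (P₁ - a * Z) = P₁ := by rw [← sS, ← star_mul, hY1, ps]
  have hY3s : star Y = P₁ * (star Y * P₁) := by
    conv_lhs => rw [hY3]
    rw [star_mul, star_mul, ps]
    noncomm_ring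
  have ys : star Y = Y := by
    have h2 : star Y * P₁ = star Y := by
      conv_lhs => rw [hY3s]
      rw [mul_assoc, mul_assoc (star Y) P₁ P₁, pp, ← hY3s]
    calc star Y = star Y * P₁ := h2.symm
      _ = star Y * ((P₁ - a * Z) * Y) := by rw [hY1]
      _ = (star Y * (P₁ - a * Z)) * Y := by rw [mul_assoc]
      _ = P₁ * Y := by rw [ysp]
      _ = Y := py
  have e1 : (P₁ + Z) * (Y * (P₁ - a)) = Y - Y * a + Z * Y - Z * Y * a := by
    calc (P₁ + Z) * (Y * (P₁ - a))
        = P₁ * Y * P₁ - P₁ * Y * a + Z * Y * P₁ - Z * Y * a := by noncomm_ring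
      _ = Y - Y * a + Z * Y - Z * Y * a := by rw [py, yp, mul_assoc Z Y P₁, yp]
  have key1 : Y - Y * (a * Z) = P₁ := by
    calc Y - Y * (a * Z) = Y * (P₁ - a * Z) := by rw [mul_sub, yp]
      _ = P₁ := hY2
  have hP₁eq : Y - a * Z * Y = P₁ := by
    calc Y - a * Z * Y = (P₁ - a * Z) * Y := by rw [sub_mul, py]
      _ = P₁ := hY1
  have Ap : (P₁ + Z) * P₁ = P₁ + Z := by rw [add_mul, pp, zp]
  have BA : (P₁ - a) * (P₁ + Z) = P₁ - a * Z := by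
    calc (P₁ - a) * (P₁ + Z) = P₁ * P₁ + P₁ * Z - (a * P₁ + a * Z) := by noncomm_ring
      _ = P₁ - a * Z := by rw [pp, pz, ap]; noncomm_ring
  -- conjugation facts
  have cjz : conjOp J Z = a := by rw [← hZsym, conjOp_conjOp J hJ]
  set q : K →L[ℂ] K := 1 - P₁ with hq
  have qq : q * q = q := by
    rw [hq, sub_mul, one_mul, mul_sub, mul_one, pp]; noncomm_ring
  have qz : q * Z = Z := by rw [hq, sub_mul, one_mul, pz, sub_zero]
  have aq : a * q = a := by rw [hq, mul_sub, mul_one, ap, sub_zero]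
  have cjS : conjOp J (P₁ - a * Z) = q - Z * a := by
    rw [conjOp_sub, conjOp_mul J hJ, hP₁conj, hZsym, cjz]
  set Yb := conjOp J Y with hYb
  have hYb1 : (q - Z * a) * Yb = q := by
    have h := congrArg (conjOp J) hY1
    rwa [conjOp_mul J hJ, cjS, hP₁conj] at h
  have hYb2 : Yb * (q - Z * a) = q := by
    have h := congrArg (conjOp J) hY2
    rwa [conjOp_mul J hJ, cjS, hP₁conj] at h
  have hYb3 : Yb = q * (Yb * q) := by
    have h := congrArg (conjOp J) hY3
    rwa [conjOp_mul J hJ, conjOp_mul J hJ, hP₁conj] at h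
  have qyb : q * Yb = Yb := by
    conv_lhs => rw [hYb3]
    rw [← mul_assoc, qq, ← hYb3]
  have ybq : Yb * q = Yb := by
    conv_lhs => rw [hYb3]
    rw [mul_assoc, mul_assoc Yb q q, qq, ← hYb3]
  have zS : Z * (P₁ - a * Z) = (q - Z * a) * Z := by
    rw [mul_sub, zp, sub_mul, qz, mul_assoc]
  have aSb : a * (q - Z * a) = (P₁ - a * Z) * a := by
    rw [mul_sub, aq, sub_mul, pa, mul_assoc]
  have comm1 : Z * Y = Yb * Z := by
    have h : Yb * Z = Z * Y := by
      calc Yb * Z = Yb * (Z * P₁) := by rw [zp]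
        _ = Yb * (Z * ((P₁ - a * Z) * Y)) := by rw [hY1]
        _ = (Yb * (Z * (P₁ - a * Z))) * Y := by noncomm_ring
        _ = (Yb * ((q - Z * a) * Z)) * Y := by rw [zS]
        _ = ((Yb * (q - Z * a)) * Z) * Y := by noncomm_ring
        _ = (q * Z) * Y := by rw [hYb2]
        _ = Z * Y := by rw [qz]
    exact h.symm
  have comm2 : Y * a = a * Yb := by
    calc Y * a = Y * (a * q) := by rw [aq]
      _ = Y * (a * ((q - Z * a) * Yb)) := by rw [hYb1]
      _ = (Y * (a * (q - Z * a))) * Yb := by noncomm_ring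
      _ = (Y * ((P₁ - a * Z) * a)) * Yb := by rw [aSb]
      _ = ((Y * (P₁ - a * Z)) * a) * Yb := by noncomm_ring
      _ = (P₁ * a) * Yb := by rw [hY2]
      _ = a * Yb := by rw [pa]
  have key2 : Yb - Yb * (Z * a) = q := by
    calc Yb - Yb * (Z * a) = Yb * (q - Z * a) := by rw [mul_sub, ybq]
      _ = q := hYb2
  have e2 : (q + a) * (Yb * (q - Z)) = Yb - Yb * Z + a * Yb - a * Yb * Z := by
    calc (q + a) * (Yb * (q - Z))
        = q * Yb * q - q * Yb * Z + a * Yb * q - a * Yb * Z := by noncomm_ring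
      _ = Yb - Yb * Z + a * Yb - a * Yb * Z := by
          rw [qyb, ybq, mul_assoc a Yb q, ybq]
  refine ⟨?_, ?_, ?_, ?_, ?_, ?_⟩
  · -- κ-self-adjointness
    have hstar : star ((P₁ + Z) * (Y * (P₁ - a))) = (P₁ - Z) * (Y * (P₁ + a)) := by
      rw [star_mul, star_mul, ys, star_add, star_sub, ps, ha, star_star, ← ha]
      noncomm_ring
    rw [hstar]
    have c1 : C * (P₁ - Z) = P₁ + Z := by rw [mul_sub, cp, cz, sub_neg_eq_add]
    have c2 : (P₁ + a) * C = P₁ - a := by rw [add_mul, pc, ac, ← sub_eq_add_neg]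
    calc C * ((P₁ - Z) * (Y * (P₁ + a)) * C)
        = (C * (P₁ - Z)) * (Y * ((P₁ + a) * C)) := by noncomm_ring
      _ = (P₁ + Z) * (Y * (P₁ - a)) := by rw [c1, c2]
  · -- idempotent
    calc ((P₁ + Z) * (Y * (P₁ - a))) * ((P₁ + Z) * (Y * (P₁ - a)))
        = (P₁ + Z) * ((Y * ((P₁ - a) * (P₁ + Z))) * (Y * (P₁ - a))) := by noncomm_ring
      _ = (P₁ + Z) * ((Y * (P₁ - a * Z)) * (Y * (P₁ - a))) := by rw [BA]
      _ = (P₁ + Z) * (P₁ * (Y * (P₁ - a))) := by rw [hY2]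
      _ = ((P₁ + Z) * P₁) * (Y * (P₁ - a)) := by rw [mul_assoc]
      _ = (P₁ + Z) * (Y * (P₁ - a)) := by rw [Ap]
  · -- conjugation
    have hcj : conjOp J ((P₁ + Z) * (Y * (P₁ - a))) = (q + a) * (Yb * (q - Z)) := by
      rw [conjOp_mul J hJ, conjOp_mul J hJ, conjOp_add, conjOp_sub, hP₁conj, cjz, hZsym, ← hYb]
    rw [hcj, e2, eq_sub_iff_add_eq]
    rw [e1, comm1, comm2]
    have c3 : a * Yb * Z = Y * (a * Z) := by rw [← comm2, mul_assoc]
    have c4 : Yb * Z * a = Yb * (Z * a) := by rw [mul_assoc]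
    rw [c3, c4]
    calc Yb - Yb * Z + a * Yb - Y * (a * Z) + (Y - a * Yb + Yb * Z - Yb * (Z * a))
        = (Y - Y * (a * Z)) + (Yb - Yb * (Z * a)) := by abel
      _ = P₁ + q := by rw [key1, key2]
      _ = 1 := by rw [hq]; noncomm_ring
  · -- positivity
    intro x hx
    set w := Y ((P₁ - a) x) with hw
    have hpw : P₁ w = w := by
      rw [hw, ← ContinuousLinearMap.mul_apply, py]
    have hu : ((P₁ + Z) * (Y * (P₁ - a))) x = w + Z w := by
      rw [ContinuousLinearMap.mul_apply, ContinuousLinearMap.mul_apply, ← hw,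
        ContinuousLinearMap.add_apply, hpw]
    have hCu : C (((P₁ + Z) * (Y * (P₁ - a))) x) = w - Z w := by
      rw [hu, map_add, ← hpw, ← ContinuousLinearMap.mul_apply C P₁,
        ← ContinuousLinearMap.mul_apply C Z, cp, cz, hpw]
      simp [sub_eq_add_neg]
    have h0 : (inner ℂ w (Z w) : ℂ) = 0 := by
      conv_lhs => rw [← hpw]
      rw [← hPadj, ContinuousLinearMap.adjoint_inner_left, hPadj,
        ← ContinuousLinearMap.mul_apply P₁ Z, pz]
      simp
    have h0' : (inner ℂ (Z w) w : ℂ) = 0 := by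
      rw [← inner_conj_symm, h0, map_zero]
    have hwne : w ≠ 0 := by
      intro h
      apply hx
      rw [hu, h, map_zero, add_zero]
    have hre : (inner ℂ (((P₁ + Z) * (Y * (P₁ - a))) x)
        (C (((P₁ + Z) * (Y * (P₁ - a))) x)) : ℂ).re = ‖w‖ ^ 2 - ‖Z w‖ ^ 2 := by
      rw [hCu, hu, inner_add_left, inner_sub_right, inner_sub_right, h0, h0']
      rw [← @inner_self_eq_norm_sq ℂ, ← @inner_self_eq_norm_sq ℂ]
      simp [Complex.add_re, Complex.sub_re]
      ring
    rw [hre]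
    have h1 : ‖Z w‖ ≤ ‖Z‖ * ‖w‖ := Z.le_opNorm w
    have h2 : 0 < ‖w‖ := norm_pos_iff.2 hwne
    have h3 : 0 ≤ ‖Z‖ := norm_nonneg Z
    have h4 : 0 ≤ ‖Z w‖ := norm_nonneg _
    have h5 : ‖Z w‖ ^ 2 ≤ ‖Z‖ ^ 2 * ‖w‖ ^ 2 := by nlinarith
    have h6 : ‖Z‖ ^ 2 * ‖w‖ ^ 2 < 1 * ‖w‖ ^ 2 := by
      have : (0:ℝ) < ‖w‖ ^ 2 := by positivity
      have h7 : ‖Z‖ ^ 2 < 1 := by nlinarith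
      nlinarith
    nlinarith
  · -- range
    have hPA : ((P₁ + Z) * (Y * (P₁ - a))) * (P₁ + Z) = P₁ + Z := by
      calc ((P₁ + Z) * (Y * (P₁ - a))) * (P₁ + Z)
          = (P₁ + Z) * (Y * ((P₁ - a) * (P₁ + Z))) := by noncomm_ring
        _ = (P₁ + Z) * (Y * (P₁ - a * Z)) := by rw [BA]
        _ = (P₁ + Z) * P₁ := by rw [hY2]
        _ = P₁ + Z := Ap
    apply le_antisymm
    · rintro v hv
      obtain ⟨y, rfl⟩ := hv
      exact ⟨Y ((P₁ - a) y), by simp [ContinuousLinearMap.mul_apply]⟩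
    · rintro v hv
      obtain ⟨y, rfl⟩ := hv
      refine ⟨(P₁ + Z) y, ?_⟩
      have h := congrArg (fun T : K →L[ℂ] K => T y) hPA
      simpa [ContinuousLinearMap.mul_apply] using h
  · -- Hilbert-Schmidt
    have hterm : P₁ - (P₁ + Z) * (Y * (P₁ - a)) =
        -(a * Z * Y) + -(Z * Y) + Y * a + Z * Y * a := by
      rw [e1, ← hP₁eq]
      abel
    rw [hterm]
    have hZa : IsHS a := by
      have h := hZHS.adjoint'
      rwa [← star_eq_adjoint, ← ha] at h
    have t2 : IsHS (Z * Y) := hZHS.mul_right Y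
    have t1 : IsHS (a * Z * Y) := by
      have h : IsHS (a * (Z * Y)) := t2.mul_left a
      rwa [← mul_assoc] at h
    have t3 : IsHS (Y * a) := hZa.mul_left Y
    have t4 : IsHS (Z * Y * a) := t2.mul_right a
    exact ((t1.neg.add t2.neg).add t3).add t4
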